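/- arXiv:quant-ph/0407174 — 6 statements merged into one kernel-verified Lean document; each statement's English description precedes it below -/
import Mathlib

section
/- Let D ≥ 1, let ρ be a D×D complex positive semidefinite matrix with trace 1, and let u, v ∈ ℂ^D be unit vectors. Then ⟨u, ρu⟩ + ⟨v, ρv⟩ ≤ 1 + |⟨u, v⟩|. -/
open Matrix ComplexOrder
open scoped InnerProductSpace ComplexConjugate

lemma key_inner_bound {E : Type*} [NormedAddCommGroup E] [InnerProductSpace ℂ E]
    (u v x : E) (hu : ‖u‖ = 1) (hv : ‖v‖ = 1) :
    ‖⟪u, x⟫_ℂ‖ ^ 2 + ‖⟪v, x⟫_ℂ‖ ^ 2 ≤ (1 + ‖⟪u, v⟫_ℂ‖) * ‖x‖ ^ 2 := by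
  set a : ℂ := ⟪u, x⟫_ℂ with ha
  set b : ℂ := ⟪v, x⟫_ℂ with hb
  set c : ℂ := ⟪u, v⟫_ℂ with hc
  set w : E := a • u + b • v with hw
  set S : ℝ := ‖a‖ ^ 2 + ‖b‖ ^ 2 with hS
  have hS0 : 0 ≤ S := by positivity
  rcases eq_or_lt_of_le hS0 with h0 | hpos
  · have h1 : (0:ℝ) ≤ (1 + ‖c‖) * ‖x‖ ^ 2 := by positivity
    linarith [h1, h0.symm.le]
  have hwx : ⟪w, x⟫_ℂ = (S : ℂ) := by
    rw [hw, inner_add_left, inner_smul_left, inner_smul_left, ← ha, ← hb, hS]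
    rw [Complex.conj_mul', Complex.conj_mul']
    push_cast
    ring
  have hww : ‖w‖ ^ 2 ≤ S * (1 + ‖c‖) := by
    have h2 : (‖w‖ ^ 2 : ℝ) = (⟪w, w⟫_ℂ).re := by
      have := inner_self_eq_norm_sq (𝕜 := ℂ) (x := w)
      simpa [RCLike.re_to_complex] using this.symm
    have hexp : ⟪w, w⟫_ℂ = (conj a) * a * ⟪u,u⟫_ℂ + (conj a) * b * ⟪u,v⟫_ℂ
        + (conj b) * a * ⟪v,u⟫_ℂ + (conj b) * b * ⟪v,v⟫_ℂ := by
      rw [hw, inner_add_left, inner_add_right, inner_add_right,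
        inner_smul_left, inner_smul_left, inner_smul_left, inner_smul_left,
        inner_smul_right, inner_smul_right, inner_smul_right, inner_smul_right]
      ring
    have huu : ⟪u,u⟫_ℂ = 1 := by
      rw [inner_self_eq_norm_sq_to_K, hu]; norm_num
    have hvv : ⟪v,v⟫_ℂ = 1 := by
      rw [inner_self_eq_norm_sq_to_K, hv]; norm_num
    have hvu : ⟪v,u⟫_ℂ = conj c := by rw [hc, ← inner_conj_symm]
    rw [h2, hexp, huu, hvv, hvu, ← hc]
    simp only [mul_one]
    have hre : ((conj a) * a + (conj a * b * c) + (conj b * a * conj c) + (conj b) * b).re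
        = ‖a‖^2 + ‖b‖^2 + 2 * (conj a * b * c).re := by
      have e1 : conj b * a * conj c = conj (conj a * b * c) := by
        simp [mul_comm, mul_left_comm]
      rw [e1]
      simp [Complex.conj_mul', Complex.add_re, Complex.conj_re, ← Complex.ofReal_pow,
        Complex.ofReal_re]
      ring
    rw [hre]
    have hb2 : 2 * (conj a * b * c).re ≤ (‖a‖^2 + ‖b‖^2) * ‖c‖ := by
      have h3 : (conj a * b * c).re ≤ ‖conj a * b * c‖ := Complex.re_le_norm _
      have h4 : ‖conj a * b * c‖ = ‖a‖ * ‖b‖ * ‖c‖ := by simp [norm_mul]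
      have h5 : 2 * (‖a‖ * ‖b‖) ≤ ‖a‖^2 + ‖b‖^2 := by nlinarith [sq_nonneg (‖a‖ - ‖b‖)]
      nlinarith [norm_nonneg c, mul_le_mul_of_nonneg_right h5 (norm_nonneg c)]
    rw [hS]; nlinarith
  have hcs : ‖⟪w, x⟫_ℂ‖ ≤ ‖w‖ * ‖x‖ := norm_inner_le_norm w x
  have hSnorm : ‖⟪w, x⟫_ℂ‖ = S := by rw [hwx]; simp [abs_of_nonneg hS0]
  have hsq : S ^ 2 ≤ S * (1 + ‖c‖) * ‖x‖ ^ 2 := by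
    have := mul_le_mul hcs hcs (norm_nonneg _) (by positivity)
    rw [hSnorm] at this
    nlinarith [norm_nonneg w, norm_nonneg x, sq_nonneg (‖w‖*‖x‖)]
  have := le_of_mul_le_mul_left (by nlinarith : S * S ≤ S * ((1 + ‖c‖) * ‖x‖^2)) hpos
  linarith [this]

/-- General principle underlying the binding bound of Kent's Protocol 1: for any
`D×D` density matrix `ρ` and unit vectors `u, v ∈ ℂ^D`,
`⟨u, ρu⟩ + ⟨v, ρv⟩ ≤ 1 + |⟨u, v⟩|`. -/
theorem density_two_states_bound (D : ℕ) (hD : 1 ≤ D)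
    (ρ : Matrix (Fin D) (Fin D) ℂ) (hρ : ρ.PosSemidef) (htr : ρ.trace = 1)
    (u v : Fin D → ℂ) (hu : star u ⬝ᵥ u = 1) (hv : star v ⬝ᵥ v = 1) :
    (star u ⬝ᵥ (ρ *ᵥ u)).re + (star v ⬝ᵥ (ρ *ᵥ v)).re ≤ 1 + ‖star u ⬝ᵥ v‖ := by
  obtain ⟨B, hB⟩ : ∃ B : Matrix (Fin D) (Fin D) ℂ, ρ = Bᴴ * B := by
    open MatrixOrder Matrix.Norms.L2Operator in
    exact CStarAlgebra.nonneg_iff_eq_star_mul_self.mp hρ.nonneg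
  -- quadratic form via B
  have hq : ∀ y : Fin D → ℂ, star y ⬝ᵥ (ρ *ᵥ y) = star (B *ᵥ y) ⬝ᵥ (B *ᵥ y) := by
    intro y
    rw [hB, ← Matrix.mulVec_mulVec, dotProduct_mulVec, ← Matrix.star_mulVec]
  -- real part of self dot product
  have hre : ∀ y : Fin D → ℂ, (star y ⬝ᵥ y).re = ∑ i, ‖y i‖ ^ 2 := by
    intro y
    simp only [dotProduct, Pi.star_apply, Complex.re_sum]
    refine Finset.sum_congr rfl fun i _ => ?_
    rw [Complex.star_def, Complex.conj_mul']
    push_cast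
    simp [← Complex.ofReal_pow]
  -- Euclidean space versions
  set e : (Fin D → ℂ) ≃ EuclideanSpace ℂ (Fin D) := (WithLp.equiv 2 (Fin D → ℂ)).symm with he
  set U : EuclideanSpace ℂ (Fin D) := e u with hU
  set V : EuclideanSpace ℂ (Fin D) := e v with hV
  set X : Fin D → EuclideanSpace ℂ (Fin D) := fun i => e (star (B i)) with hX
  have hinner : ∀ y z : Fin D → ℂ, ⟪e y, e z⟫_ℂ = star y ⬝ᵥ z := fun y z =>
    by rw [dotProduct_comm]; rfl
  have hnormsq : ∀ y : Fin D → ℂ, ‖e y‖ ^ 2 = (star y ⬝ᵥ y).re := by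
    intro y
    have := inner_self_eq_norm_sq (𝕜 := ℂ) (x := e y)
    rw [hinner y y] at this
    simpa [RCLike.re_to_complex] using this.symm
  have hnorm1 : ∀ y : Fin D → ℂ, star y ⬝ᵥ y = 1 → ‖e y‖ = 1 := by
    intro y hy
    have h2 : ‖e y‖ ^ 2 = 1 := by rw [hnormsq y, hy]; simp
    rw [← Real.sqrt_sq (norm_nonneg (e y)), h2, Real.sqrt_one]
  have hUn : ‖U‖ = 1 := hnorm1 u hu
  have hVn : ‖V‖ = 1 := hnorm1 v hv
  have hXU : ∀ (i : Fin D) (y : Fin D → ℂ), ⟪X i, e y⟫_ℂ = (B *ᵥ y) i := by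
    intro i y
    rw [hX, hinner]
    simp [Matrix.mulVec, dotProduct]
  have hXnorm : ∀ i : Fin D, ‖X i‖ ^ 2 = ∑ j, ‖B i j‖ ^ 2 := by
    intro i
    rw [hX, hnormsq, hre]
    simp
  have hcval : ⟪U, V⟫_ℂ = star u ⬝ᵥ v := hinner u v
  -- trace identity
  have htrace : ∑ i, ∑ j, ‖B i j‖ ^ 2 = 1 := by
    have h1 : ρ.trace.re = 1 := by rw [htr]; simp
    rw [hB] at h1
    have h2 : (Bᴴ * B).trace = ∑ j, ∑ i, conj (B i j) * B i j := by
      simp [Matrix.trace, Matrix.diag, Matrix.mul_apply, Matrix.conjTranspose_apply]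
    rw [h2, Complex.re_sum] at h1
    rw [Finset.sum_comm]
    rw [← h1]
    refine Finset.sum_congr rfl fun j _ => ?_
    rw [Complex.re_sum]
    refine Finset.sum_congr rfl fun i _ => ?_
    rw [Complex.conj_mul']
    push_cast
    simp [← Complex.ofReal_pow]
  -- main chain
  have hp : (star u ⬝ᵥ (ρ *ᵥ u)).re = ∑ i, ‖⟪X i, U⟫_ℂ‖ ^ 2 := by
    rw [hq u, hre]
    refine Finset.sum_congr rfl fun i _ => ?_
    rw [hU, hXU i u]
  have hpv : (star v ⬝ᵥ (ρ *ᵥ v)).re = ∑ i, ‖⟪X i, V⟫_ℂ‖ ^ 2 := by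
    rw [hq v, hre]
    refine Finset.sum_congr rfl fun i _ => ?_
    rw [hV, hXU i v]
  rw [hp, hpv, ← Finset.sum_add_distrib]
  have hbound : ∀ i : Fin D, ‖⟪X i, U⟫_ℂ‖ ^ 2 + ‖⟪X i, V⟫_ℂ‖ ^ 2
      ≤ (1 + ‖⟪U, V⟫_ℂ‖) * ‖X i‖ ^ 2 := by
    intro i
    have := key_inner_bound U V (X i) hUn hVn
    rwa [norm_inner_symm U (X i), norm_inner_symm V (X i)] at this
  calc ∑ i, (‖⟪X i, U⟫_ℂ‖ ^ 2 + ‖⟪X i, V⟫_ℂ‖ ^ 2)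
      ≤ ∑ i, (1 + ‖⟪U, V⟫_ℂ‖) * ‖X i‖ ^ 2 := Finset.sum_le_sum fun i _ => hbound i
    _ = (1 + ‖⟪U, V⟫_ℂ‖) * ∑ i, ∑ j, ‖B i j‖ ^ 2 := by
        rw [← Finset.mul_sum]
        congr 1
        exact Finset.sum_congr rfl fun i _ => hXnorm i
    _ = 1 + ‖star u ⬝ᵥ v‖ := by
        rw [htrace, mul_one, hcval]
end

section
/- Let D ≥ 1, let r ≥ 1, let ε ≥ 0, and let Ψ₁, …, Ψ_r ∈ ℂ^D be unit vectors such that |⟨Ψ_i, Ψ_j⟩| ≤ ε for all i ≠ j. Then for every D×D complex positive semidefinite matrix ρ with trace 1, the sum ∑_{i=1}^r ⟨Ψ_i, ρΨ_i⟩ ≤ 1 + (r − 1)ε. -/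
open Matrix ComplexOrder

lemma kent_key (D r : ℕ) (ε : ℝ) (hε : 0 ≤ ε)
    (Ψ : Fin r → (Fin D → ℂ)) (hunit : ∀ i, star (Ψ i) ⬝ᵥ Ψ i = 1)
    (hortho : ∀ i j, i ≠ j → ‖star (Ψ i) ⬝ᵥ Ψ j‖ ≤ ε)
    (hr : 1 ≤ r) (x : Fin D → ℂ) :
    ∑ i, ‖star (Ψ i) ⬝ᵥ x‖ ^ 2 ≤ (1 + ((r : ℝ) - 1) * ε) * ∑ k, ‖x k‖ ^ 2 := by
  classical
  set c : ℝ := 1 + ((r : ℝ) - 1) * ε with hc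
  have hc1 : (1 : ℝ) ≤ c := by
    have h0 : 0 ≤ ((r : ℝ) - 1) * ε := by
      apply mul_nonneg _ hε
      have : (1 : ℝ) ≤ (r : ℝ) := by exact_mod_cast hr
      linarith
    linarith
  have hc0 : (0:ℝ) < c := lt_of_lt_of_le one_pos hc1
  -- Euclidean space setup
  set e : (Fin D → ℂ) → EuclideanSpace ℂ (Fin D) := fun u => (WithLp.equiv 2 (Fin D → ℂ)).symm u with he
  set y0 : EuclideanSpace ℂ (Fin D) := 0
  set a : Fin r → ℂ := fun i => star (Ψ i) ⬝ᵥ x with ha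
  set S : ℝ := ∑ i, ‖a i‖ ^ 2 with hS
  have hSnn : 0 ≤ S := Finset.sum_nonneg fun i _ => by positivity
  set y : EuclideanSpace ℂ (Fin D) := ∑ i, a i • e (Ψ i) with hy
  have hinner : ∀ u v : Fin D → ℂ, (inner ℂ (e u) (e v) : ℂ) = star u ⬝ᵥ v := by
    intro u v
    exact (EuclideanSpace.inner_toLp_toLp u v).trans (dotProduct_comm _ _)
  have h1 : (inner ℂ y (e x) : ℂ) = (S : ℝ) := by
    rw [hy, sum_inner]
    simp_rw [inner_smul_left, hinner]
    rw [hS]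
    push_cast
    refine Finset.sum_congr rfl fun i _ => ?_
    have hai : star (Ψ i) ⬝ᵥ x = a i := rfl
    rw [hai, RCLike.conj_mul (a i)]
    norm_cast
  have h2 : ‖y‖ ^ 2 ≤ c * S := by
    have hyy : (inner ℂ y y : ℂ) = ∑ i, ∑ j, (starRingEnd ℂ) (a i) * a j * (star (Ψ i) ⬝ᵥ Ψ j) := by
      rw [hy, sum_inner]
      congr 1; ext i
      rw [inner_smul_left, inner_sum]
      rw [Finset.mul_sum]
      congr 1; ext j
      rw [inner_smul_right, hinner]
      ring
    have hnorm : ‖y‖ ^ 2 ≤ ‖(inner ℂ y y : ℂ)‖ := by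
      rw [← inner_self_eq_norm_sq (𝕜 := ℂ) y]
      exact Complex.re_le_norm _
    refine hnorm.trans ?_
    rw [hyy]
    refine (norm_sum_le _ _).trans ?_
    have hbound : ∀ i, ‖∑ j, (starRingEnd ℂ) (a i) * a j * (star (Ψ i) ⬝ᵥ Ψ j)‖
        ≤ ‖a i‖ ^ 2 + ε * ∑ j ∈ Finset.univ.erase i, ‖a i‖ * ‖a j‖ := by
      intro i
      rw [← Finset.add_sum_erase _ _ (Finset.mem_univ i)]
      refine (norm_add_le _ _).trans ?_
      gcongr
      · rw [hunit i, mul_one, norm_mul, RCLike.norm_conj, sq]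
      · refine (norm_sum_le _ _).trans ?_
        rw [Finset.mul_sum]
        refine Finset.sum_le_sum fun j hj => ?_
        have hij : i ≠ j := fun h => (Finset.mem_erase.mp hj).1 h.symm
        rw [norm_mul, norm_mul, RCLike.norm_conj]
        have hortho' : ‖star (Ψ i) ⬝ᵥ Ψ j‖ ≤ ε := by
          exact hortho i j hij
        calc ‖a i‖ * ‖a j‖ * ‖star (Ψ i) ⬝ᵥ Ψ j‖ ≤ ‖a i‖ * ‖a j‖ * ε := by
              gcongr
          _ = ε * (‖a i‖ * ‖a j‖) := by ring
    refine (Finset.sum_le_sum fun i _ => hbound i).trans ?_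
    rw [Finset.sum_add_distrib, ← hS]
    have hoff : ∑ i, ∑ j ∈ Finset.univ.erase i, ‖a i‖ * ‖a j‖ ≤ ((r : ℝ) - 1) * S := by
      have hfull : ∑ i, ∑ j, ‖a i‖ * ‖a j‖ = (∑ i, ‖a i‖) ^ 2 := by
        rw [sq, Finset.sum_mul_sum]
      have hsq : (∑ i, ‖a i‖) ^ 2 ≤ (r : ℝ) * S := by
        have h := sq_sum_le_card_mul_sum_sq (s := (Finset.univ : Finset (Fin r)))
          (f := fun i => ‖a i‖)
        simpa [hS] using h
      have : ∑ i, ∑ j ∈ Finset.univ.erase i, ‖a i‖ * ‖a j‖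
          = (∑ i, ∑ j, ‖a i‖ * ‖a j‖) - S := by
        rw [hS, ← Finset.sum_sub_distrib]
        congr 1; ext i
        rw [Finset.sum_erase_eq_sub (Finset.mem_univ i)]
        ring
      rw [this, hfull]
      linarith
    calc S + ∑ i, ε * ∑ j ∈ Finset.univ.erase i, ‖a i‖ * ‖a j‖
        = S + ε * ∑ i, ∑ j ∈ Finset.univ.erase i, ‖a i‖ * ‖a j‖ := by
          rw [Finset.mul_sum]
      _ ≤ S + ε * (((r : ℝ) - 1) * S) := by gcongr
      _ = c * S := by rw [hc]; ring
  -- Cauchy-Schwarz conclusion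
  have hCS : S ≤ ‖y‖ * ‖e x‖ := by
    calc S = ‖(inner ℂ y (e x) : ℂ)‖ := by rw [h1]; simp [abs_of_nonneg hSnn]
      _ ≤ ‖y‖ * ‖e x‖ := norm_inner_le_norm y (e x)
  have hex : ‖e x‖ ^ 2 = ∑ k, ‖x k‖ ^ 2 := by
    rw [EuclideanSpace.norm_eq]
    rw [Real.sq_sqrt (Finset.sum_nonneg fun k _ => by positivity)]
    rfl
  have hgoal : S ≤ c * ∑ k, ‖x k‖ ^ 2 := by
    rcases eq_or_lt_of_le hSnn with hS0 | hS0
    · rw [← hS0]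
      positivity
    · have h3 : S ^ 2 ≤ (c * S) * ‖e x‖ ^ 2 := by
        calc S ^ 2 ≤ (‖y‖ * ‖e x‖) ^ 2 := pow_le_pow_left₀ hSnn hCS 2
          _ = ‖y‖ ^ 2 * ‖e x‖ ^ 2 := by ring
          _ ≤ (c * S) * ‖e x‖ ^ 2 := by gcongr
      rw [← hex]
      nlinarith [sq_nonneg (‖e x‖)]
  simpa [hS, ha] using hgoal


/-- Kent's binding result: if `Ψ₁, …, Ψ_r ∈ ℂ^D` are unit vectors with pairwise overlap
`|⟨Ψ_i, Ψ_j⟩| ≤ ε` for `i ≠ j`, then for every `D×D` density matrix `ρ`,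
`∑ i, ⟨Ψ_i, ρΨ_i⟩ ≤ 1 + (r − 1)ε`. -/
theorem kent_binding (D r : ℕ) (hD : 1 ≤ D) (hr : 1 ≤ r) (ε : ℝ) (hε : 0 ≤ ε)
    (Ψ : Fin r → (Fin D → ℂ)) (hunit : ∀ i, star (Ψ i) ⬝ᵥ Ψ i = 1)
    (hortho : ∀ i j, i ≠ j → ‖star (Ψ i) ⬝ᵥ Ψ j‖ ≤ ε)
    (ρ : Matrix (Fin D) (Fin D) ℂ) (hρ : ρ.PosSemidef) (htr : ρ.trace = 1) :
    ∑ i, (star (Ψ i) ⬝ᵥ (ρ *ᵥ Ψ i)).re ≤ 1 + ((r : ℝ) - 1) * ε := by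
  classical
  open scoped MatrixOrder in
  obtain ⟨B, hB⟩ := CStarAlgebra.nonneg_iff_eq_star_mul_self.mp hρ.nonneg
  rw [Matrix.star_eq_conjTranspose] at hB
  set c : ℝ := 1 + ((r : ℝ) - 1) * ε with hc
  have hterm : ∀ i, (star (Ψ i) ⬝ᵥ (ρ *ᵥ Ψ i)).re = ∑ k, ‖(B *ᵥ Ψ i) k‖ ^ 2 := by
    intro i
    rw [hB, ← Matrix.mulVec_mulVec, Matrix.dotProduct_mulVec]
    have h1 : star (Ψ i) ᵥ* Bᴴ = star (B *ᵥ Ψ i) := (Matrix.star_mulVec B (Ψ i)).symm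
    rw [h1]
    rw [dotProduct]
    rw [Complex.re_sum]
    refine Finset.sum_congr rfl fun k _ => ?_
    simp only [Pi.star_apply]
    rw [RCLike.star_def, mul_comm, Complex.mul_conj]
    simp [Complex.normSq_eq_norm_sq]
    norm_cast
  calc ∑ i, (star (Ψ i) ⬝ᵥ (ρ *ᵥ Ψ i)).re
      = ∑ i, ∑ k, ‖(B *ᵥ Ψ i) k‖ ^ 2 := Finset.sum_congr rfl fun i _ => hterm i
    _ = ∑ k, ∑ i, ‖(B *ᵥ Ψ i) k‖ ^ 2 := Finset.sum_comm
    _ ≤ ∑ k, c * ∑ j, ‖star (B k) j‖ ^ 2 := by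
        refine Finset.sum_le_sum fun k _ => ?_
        have h2 : ∀ i, ‖(B *ᵥ Ψ i) k‖ = ‖star (Ψ i) ⬝ᵥ star (B k)‖ := by
          intro i
          have : star (Ψ i) ⬝ᵥ star (B k) = star ((B *ᵥ Ψ i) k) := by
            simp [Matrix.mulVec, dotProduct, Finset.mul_sum, mul_comm, star_sum]
          rw [this, norm_star]
        simp_rw [h2]
        exact kent_key D r ε hε Ψ hunit hortho hr (star (B k))
    _ = c * ∑ k, ∑ j, ‖B k j‖ ^ 2 := by
        rw [Finset.mul_sum]
        refine Finset.sum_congr rfl fun k _ => ?_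
        congr 1
        exact Finset.sum_congr rfl fun j _ => by simp [norm_star]
    _ = c * 1 := by
        congr 1
        have h3 : (ρ.trace).re = ∑ k, ∑ j, ‖B k j‖ ^ 2 := by
          rw [hB]
          have htr2 : (Bᴴ * B).trace = ∑ k, ∑ j, ((starRingEnd ℂ) (B k j) * B k j) := by
            rw [Matrix.trace]
            simp only [Matrix.diag_apply, Matrix.mul_apply, Matrix.conjTranspose_apply,
              RCLike.star_def]
            rw [Finset.sum_comm]
          rw [htr2, Complex.re_sum]
          refine Finset.sum_congr rfl fun k _ => ?_
          rw [Complex.re_sum]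
          refine Finset.sum_congr rfl fun j _ => ?_
          rw [mul_comm, Complex.mul_conj]
          simp [Complex.normSq_eq_norm_sq]
          norm_cast
        rw [← h3, htr]
        simp
    _ = c := mul_one c
end

section
/- Let q, D, N, d ≥ 1 and let e₀, …, e_{q−1} ∈ ℂ^D be unit vectors with |⟨e_a, e_b⟩| ≤ β̄ for all a ≠ b, where 0 ≤ β̄ ≤ 1. Let c, c' : {1,…,N} → {0,…,q−1} be strings whose Hamming distance is at least d. Define product states Ψ_c(x) = ∏_{i=1}^N e_{c_i}(x_i) and Ψ_{c'}(x) = ∏_{i=1}^N e_{c'_i}(x_i) in ℂ^{(Fin N → Fin D)}. Then |⟨Ψ_c, Ψ_{c'}⟩| ≤ β̄^d. -/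
open Matrix

/-- Approximate orthogonality (8) of the commitment states of the proposed protocol:
if the particle states `e₀, …, e_{q−1} ∈ ℂ^D` are unit vectors with pairwise overlaps
at most `β̄`, and the codewords `c, c'` have Hamming distance at least `d`, then the
corresponding product states satisfy `|⟨Ψ_c, Ψ_{c'}⟩| ≤ β̄^d`. -/
theorem commitment_states_approx_orthogonal (q D N d : ℕ)
    (hq : 1 ≤ q) (hD : 1 ≤ D) (hN : 1 ≤ N) (hd : 1 ≤ d)
    (β : ℝ) (hβ0 : 0 ≤ β) (hβ1 : β ≤ 1)
    (e : Fin q → (Fin D → ℂ))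
    (hunit : ∀ a, star (e a) ⬝ᵥ e a = 1)
    (hover : ∀ a b, a ≠ b → ‖star (e a) ⬝ᵥ e b‖ ≤ β)
    (c c' : Fin N → Fin q) (hdist : d ≤ hammingDist c c')
    (Ψ Ψ' : (Fin N → Fin D) → ℂ)
    (hΨ : ∀ x, Ψ x = ∏ i, e (c i) (x i))
    (hΨ' : ∀ x, Ψ' x = ∏ i, e (c' i) (x i)) :
    ‖star Ψ ⬝ᵥ Ψ'‖ ≤ β ^ d := by
  have key : star Ψ ⬝ᵥ Ψ' = ∏ i, star (e (c i)) ⬝ᵥ e (c' i) := by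
    have : star Ψ ⬝ᵥ Ψ' = ∑ x : Fin N → Fin D, ∏ i, (star (e (c i)) (x i) * e (c' i) (x i)) := by
      simp only [dotProduct, Pi.star_apply, hΨ, hΨ']
      refine Finset.sum_congr rfl fun x _ => ?_
      rw [star_prod, ← Finset.prod_mul_distrib]
    rw [this, ← Fintype.piFinset_univ]
    simp only [dotProduct, Pi.star_apply]
    exact (Finset.prod_univ_sum (fun _ => Finset.univ)
      (fun i j => star (e (c i)) j * e (c' i) j)).symm
  rw [key, norm_prod]
  set S := Finset.univ.filter (fun i => c i ≠ c' i) with hS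
  have hcard : d ≤ S.card := hdist
  have hprod : ∏ i, ‖star (e (c i)) ⬝ᵥ e (c' i)‖
      = ∏ i ∈ S, ‖star (e (c i)) ⬝ᵥ e (c' i)‖ := by
    symm
    refine Finset.prod_subset (Finset.subset_univ S) fun i _ hi => ?_
    simp only [hS, Finset.mem_filter, Finset.mem_univ, true_and, not_not] at hi
    rw [hi, hunit]
    simp
  rw [hprod]
  calc ∏ i ∈ S, ‖star (e (c i)) ⬝ᵥ e (c' i)‖
      ≤ ∏ _i ∈ S, β := by
        refine Finset.prod_le_prod (fun i _ => norm_nonneg _) fun i hi => ?_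
        simp only [hS, Finset.mem_filter, Finset.mem_univ, true_and] at hi
        exact hover _ _ hi
    _ = β ^ S.card := by rw [Finset.prod_const]
    _ ≤ β ^ d := pow_le_pow_of_le_one hβ0 hβ1 hcard
end

section
/- Let H be a finite-dimensional complex inner product space, let r ≥ 1, let ε₁ ≥ 0, and for i ∈ {1,…,r} let P_i : H → H be linear maps with operator norm ‖P_i‖ ≤ 1, and let Γ_i ∈ H be unit vectors. Suppose |⟨Γ_j, P_i Γ_k⟩| ≤ ε₁ for every triple (i,j,k) that does not satisfy i = j = k. Let v : {1,…,r} → ℂ with ∑_i |v_i|² = 1 and set Ψ_V := ∑_i v_i Γ_i and Q := ∑_i P_i. Then |⟨Ψ_V, Q Ψ_V⟩| ≤ 1 + (r² − 1)ε₁. -/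
/-- Inequality (30) of Lemma 4: if `P_i` are contractions (`‖P_i‖ ≤ 1`), `Γ_i` are unit
vectors with cross matrix elements `|⟨Γ_j, P_i Γ_k⟩| ≤ ε₁` whenever not `i = j = k`,
and `∑ |v_i|² = 1`, then with `Ψ_V = ∑ v_i Γ_i` and `Q = ∑ P_i`,
`|⟨Ψ_V, Q Ψ_V⟩| ≤ 1 + (r² − 1)ε₁`. -/
theorem lemma4_main_bound {H : Type*} [NormedAddCommGroup H] [InnerProductSpace ℂ H]
    [FiniteDimensional ℂ H]
    (r : ℕ) (hr : 1 ≤ r) (ε₁ : ℝ) (hε₁ : 0 ≤ ε₁)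
    (P : Fin r → (H →L[ℂ] H)) (hPnorm : ∀ i, ‖P i‖ ≤ 1)
    (Γ : Fin r → H) (hΓ : ∀ i, ‖Γ i‖ = 1)
    (hcross : ∀ i j k, ¬(i = j ∧ j = k) →
      ‖(inner ℂ (Γ j) (P i (Γ k)) : ℂ)‖ ≤ ε₁)
    (v : Fin r → ℂ) (hv : ∑ i, ‖v i‖ ^ 2 = 1) :
    ‖(inner ℂ (∑ i, v i • Γ i) ((∑ i, P i) (∑ i, v i • Γ i)) : ℂ)‖ ≤
      1 + ((r : ℝ) ^ 2 - 1) * ε₁ := by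
  set a : Fin r → ℝ := fun i => ‖v i‖ with ha
  have ha0 : ∀ i, 0 ≤ a i := fun i => norm_nonneg _
  have expand : (inner ℂ (∑ i, v i • Γ i) ((∑ i, P i) (∑ i, v i • Γ i)) : ℂ) =
      ∑ k, ∑ i, ∑ j, v k * ((starRingEnd ℂ) (v j) * inner ℂ (Γ j) (P i (Γ k))) := by
    simp only [ContinuousLinearMap.sum_apply, map_sum, ContinuousLinearMap.map_smul,
      inner_sum, sum_inner, inner_smul_left, inner_smul_right, Finset.mul_sum]
  have hdiag : ∀ i, ‖(inner ℂ (Γ i) (P i (Γ i)) : ℂ)‖ ≤ 1 := by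
    intro i
    have h1 : ‖P i (Γ i)‖ ≤ 1 := by
      have h := (P i).le_opNorm (Γ i)
      rw [hΓ i, mul_one] at h
      exact h.trans (hPnorm i)
    calc ‖(inner ℂ (Γ i) (P i (Γ i)) : ℂ)‖ ≤ ‖Γ i‖ * ‖P i (Γ i)‖ := norm_inner_le_norm _ _
      _ = ‖P i (Γ i)‖ := by rw [hΓ i, one_mul]
      _ ≤ 1 := h1
  have hterm : ∀ k i j : Fin r,
      ‖v k * ((starRingEnd ℂ) (v j) * inner ℂ (Γ j) (P i (Γ k)))‖ ≤
      a j * a k * ε₁ + (if i = j ∧ j = k then a j ^ 2 * (1 - ε₁) else 0) := by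
    intro k i j
    rw [norm_mul, norm_mul, Complex.norm_conj]
    by_cases h : i = j ∧ j = k
    · obtain ⟨h1, h2⟩ := h
      subst h1; subst h2
      simp only [and_self, if_pos, if_true, eq_self_iff_true]
      have hd := hdiag i
      have hn : (0:ℝ) ≤ ‖(inner ℂ (Γ i) (P i (Γ i)) : ℂ)‖ := norm_nonneg _
      nlinarith [ha0 i]
    · simp only [if_neg h, add_zero]
      calc ‖v k‖ * (‖v j‖ * ‖(inner ℂ (Γ j) (P i (Γ k)) : ℂ)‖)
          = ‖v j‖ * ‖v k‖ * ‖(inner ℂ (Γ j) (P i (Γ k)) : ℂ)‖ := by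
            ring
        _ ≤ ‖v j‖ * ‖v k‖ * ε₁ := by
            apply mul_le_mul_of_nonneg_left (hcross i j k h)
            positivity
        _ = a j * a k * ε₁ := rfl
  have habs : ‖(inner ℂ (∑ i, v i • Γ i) ((∑ i, P i) (∑ i, v i • Γ i)) : ℂ)‖ ≤
      ∑ k, ∑ i, ∑ j, (a j * a k * ε₁ + (if i = j ∧ j = k then a j ^ 2 * (1 - ε₁) else 0)) := by
    rw [expand]
    refine (norm_sum_le _ _).trans (Finset.sum_le_sum fun k _ => ?_)
    refine (norm_sum_le _ _).trans (Finset.sum_le_sum fun i _ => ?_)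
    refine (norm_sum_le _ _).trans (Finset.sum_le_sum fun j _ => ?_)
    exact hterm k i j
  refine habs.trans ?_
  have hsplit : ∑ k, ∑ i, ∑ j, (a j * a k * ε₁ + (if i = j ∧ j = k then a j ^ 2 * (1 - ε₁) else 0))
      = (r : ℝ) * (∑ j, a j) ^ 2 * ε₁ + (1 - ε₁) := by
    simp only [Finset.sum_add_distrib]
    congr 1
    · have h1 : ∀ k : Fin r, ∑ _i : Fin r, ∑ j, a j * a k * ε₁
          = (r : ℝ) * ∑ j, a j * a k * ε₁ := by
        intro k
        rw [Finset.sum_const, Finset.card_univ, Fintype.card_fin, nsmul_eq_mul]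
      simp only [h1, ← Finset.mul_sum, ← Finset.sum_mul]
      rw [Finset.sum_const, Finset.card_univ, Fintype.card_fin, nsmul_eq_mul]
      ring
    · have h2 : ∀ k : Fin r, ∑ i, ∑ j, (if i = j ∧ j = k then a j ^ 2 * (1 - ε₁) else 0)
          = a k ^ 2 * (1 - ε₁) := by
        intro k
        rw [Finset.sum_eq_single k]
        · rw [Finset.sum_eq_single k]
          · simp
          · intro j _ hj; simp [Ne.symm hj]
          · simp
        · intro i _ hi
          refine Finset.sum_eq_zero fun j _ => ?_
          rw [if_neg]
          rintro ⟨rfl, rfl⟩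
          exact hi rfl
        · simp
      simp only [h2, ← Finset.sum_mul]
      rw [hv, one_mul]
  rw [hsplit]
  have hr1 : (1:ℝ) ≤ r := by exact_mod_cast hr
  have hcs : (∑ j, a j) ^ 2 ≤ (r : ℝ) := by
    have h := sq_sum_le_card_mul_sum_sq (s := (Finset.univ : Finset (Fin r))) (f := a)
    rw [Finset.card_univ, Fintype.card_fin] at h
    calc (∑ j, a j) ^ 2 ≤ (r : ℝ) * ∑ j, a j ^ 2 := h
      _ = r := by rw [hv, mul_one]
  nlinarith [mul_nonneg (le_trans zero_le_one hr1) hε₁, hcs, hε₁, hr1]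
end

section
/- Let r ≥ 1, ε₁ ≥ 0, ε₂ ≥ 0 be real numbers with r·ε₁ ≤ 1/2 and r·ε₂ ≤ 1. Then for every real S ≥ 0, (1 + r²ε₁ + 2rε₂(1 + rε₁)S + rε₂S²) / (1 − rε₁ + S²) ≤ 1 + 4rε₂ + 4r²ε₁. -/
/-! With `a = rε₁`, `b = rε₂`, `c = r²ε₁`, clearing the denominator (which is at least `1/2`)
leaves the difference
`b (3S² − 2(1+a)S + 4(1−a)) + (c − a) + 2c(1 − 2a) + (1 + 4c)S²`,
and the quadratic in `S` has negative discriminant for `0 ≤ a ≤ 1/2`. -/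

lemma three_mul_sq_sub_two_mul_one_add_mul_add_four_mul_one_sub_nonneg {a : ℝ} (ha₀ : 0 ≤ a)
    (ha : a ≤ 1 / 2) (S : ℝ) : 0 ≤ 3 * S ^ 2 - 2 * (1 + a) * S + 4 * (1 - a) := by
  nlinarith [sq_nonneg (3 * S - (1 + a))]

lemma div_one_sub_add_sq_le {a b c : ℝ} (ha₀ : 0 ≤ a) (ha : a ≤ 1 / 2) (hac : a ≤ c)
    (hb : 0 ≤ b) (S : ℝ) :
    (1 + c + 2 * b * (1 + a) * S + b * S ^ 2) / (1 - a + S ^ 2) ≤ 1 + 4 * b + 4 * c := by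
  have hQ := three_mul_sq_sub_two_mul_one_add_mul_add_four_mul_one_sub_nonneg ha₀ ha S
  have hc : 0 ≤ c := ha₀.trans hac
  rw [div_le_iff₀ (by linarith [sq_nonneg S])]
  linarith [mul_nonneg hb hQ, mul_nonneg hc (by linarith : (0 : ℝ) ≤ 1 - 2 * a),
    mul_nonneg hc (sq_nonneg S), sq_nonneg S]

theorem rough_estimate_general (r : ℕ) (ε₁ ε₂ : ℝ) (hε₁ : 0 ≤ ε₁) (hε₂ : 0 ≤ ε₂)
    (h₁ : (r : ℝ) * ε₁ ≤ 1 / 2) (S : ℝ) :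
    (1 + (r : ℝ) ^ 2 * ε₁ + 2 * r * ε₂ * (1 + r * ε₁) * S + r * ε₂ * S ^ 2) /
        (1 - r * ε₁ + S ^ 2) ≤ 1 + 4 * r * ε₂ + 4 * (r : ℝ) ^ 2 * ε₁ := by
  have hr : (r : ℝ) ≤ (r : ℝ) ^ 2 := by exact_mod_cast Nat.le_self_pow two_ne_zero r
  have key := div_one_sub_add_sq_le (by positivity) h₁
    (mul_le_mul_of_nonneg_right hr hε₁) (by positivity : 0 ≤ (r : ℝ) * ε₂) S
  simpa only [mul_assoc] using key

/-- Rough estimate (38) of Section IV: for `r ≥ 1`, `ε₁ ≥ 0`, `ε₂ ≥ 0` with `r ε₁ ≤ 1/2`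
and `r ε₂ ≤ 1`, and every `S ≥ 0`,
`(1 + r²ε₁ + 2rε₂(1 + rε₁)S + rε₂S²) / (1 − rε₁ + S²) ≤ 1 + 4rε₂ + 4r²ε₁`. -/
theorem rough_estimate (r : ℕ) (hr : 1 ≤ r) (ε₁ ε₂ : ℝ) (hε₁ : 0 ≤ ε₁) (hε₂ : 0 ≤ ε₂)
    (h₁ : (r : ℝ) * ε₁ ≤ 1 / 2) (h₂ : (r : ℝ) * ε₂ ≤ 1) (S : ℝ) (hS : 0 ≤ S) :
    (1 + (r : ℝ) ^ 2 * ε₁ + 2 * r * ε₂ * (1 + r * ε₁) * S + r * ε₂ * S ^ 2) /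
        (1 - r * ε₁ + S ^ 2) ≤ 1 + 4 * r * ε₂ + 4 * (r : ℝ) ^ 2 * ε₁ :=
  rough_estimate_general r ε₁ ε₂ hε₁ hε₂ h₁ S
end

section
/- Let q, D, N, d, α ≥ 1 and let e₀, …, e_{q−1} ∈ ℂ^D be unit vectors with |⟨e_a, e_b⟩| ≤ β̄ for all a ≠ b, where 0 ≤ β̄ ≤ 1. Let c, c' : {1,…,N} → {0,…,q−1} be strings of Hamming distance at least d, and let c̃, c̃' : {1,…,N} → {0,…,q−1} be strings such that the total number of coordinates i with c̃_i ≠ c_i or c̃'_i ≠ c'_i is at most α, with α ≤ d. Define product states Ψ(x) = ∏_{i=1}^N e_{c̃_i}(x_i) and Ψ'(x) = ∏_{i=1}^N e_{c̃'_i}(x_i) in ℂ^{(Fin N → Fin D)}. Then |⟨Ψ, Ψ'⟩| ≤ β̄^{d−α}. -/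
open Matrix

/-- Approximate orthogonality (22) between basis vectors of different subspaces
`V(E(A_i))`, `V(E(A_j))`: if the codewords `c, c'` differ in at least `d` coordinates
and the shifted strings `c̃, c̃'` alter at most `α ≤ d` coordinates in total, then the
corresponding product states satisfy `|⟨Ψ, Ψ'⟩| ≤ β̄^{d−α}`. -/
theorem shifted_states_approx_orthogonal (q D N d α : ℕ)
    (hq : 1 ≤ q) (hD : 1 ≤ D) (hN : 1 ≤ N) (hd : 1 ≤ d) (hα : 1 ≤ α) (hαd : α ≤ d)
    (β : ℝ) (hβ0 : 0 ≤ β) (hβ1 : β ≤ 1)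
    (e : Fin q → (Fin D → ℂ))
    (hunit : ∀ a, star (e a) ⬝ᵥ e a = 1)
    (hover : ∀ a b, a ≠ b → ‖star (e a) ⬝ᵥ e b‖ ≤ β)
    (c c' ct ct' : Fin N → Fin q)
    (hdist : d ≤ hammingDist c c')
    (hshift : (Finset.univ.filter (fun i => ct i ≠ c i ∨ ct' i ≠ c' i)).card ≤ α)
    (Ψ Ψ' : (Fin N → Fin D) → ℂ)
    (hΨ : ∀ x, Ψ x = ∏ i, e (ct i) (x i))
    (hΨ' : ∀ x, Ψ' x = ∏ i, e (ct' i) (x i)) :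
    ‖star Ψ ⬝ᵥ Ψ'‖ ≤ β ^ (d - α) := by
  -- Factorize the inner product
  have key : star Ψ ⬝ᵥ Ψ' = ∏ i, (star (e (ct i)) ⬝ᵥ e (ct' i)) := by
    have : star Ψ ⬝ᵥ Ψ'
        = ∑ x : Fin N → Fin D, ∏ i, (star (e (ct i) (x i)) * e (ct' i) (x i)) := by
      simp only [dotProduct, Pi.star_apply, hΨ, hΨ', star_prod, Finset.prod_mul_distrib]
    rw [this]
    simp only [dotProduct, Pi.star_apply]
    rw [Finset.prod_univ_sum, Fintype.piFinset_univ]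
  rw [key, norm_prod]
  set S : Finset (Fin N) := Finset.univ.filter (fun i => ct i ≠ ct' i) with hS
  have hsplit : ∏ i, ‖star (e (ct i)) ⬝ᵥ e (ct' i)‖
      = ∏ i ∈ S, ‖star (e (ct i)) ⬝ᵥ e (ct' i)‖ := by
    rw [← Finset.prod_filter_mul_prod_filter_not Finset.univ
      (fun i => ct i ≠ ct' i)]
    have : ∏ i ∈ Finset.univ.filter (fun i => ¬ ct i ≠ ct' i),
        ‖star (e (ct i)) ⬝ᵥ e (ct' i)‖ = 1 := by
      apply Finset.prod_eq_one
      intro i hi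
      simp only [Finset.mem_filter, not_not] at hi
      rw [hi.2, hunit]
      simp
    rw [this, mul_one]
  rw [hsplit]
  have hcard : d - α ≤ S.card := by
    set T : Finset (Fin N) := Finset.univ.filter (fun i => ct i ≠ c i ∨ ct' i ≠ c' i) with hT
    set Dd : Finset (Fin N) := Finset.univ.filter (fun i => c i ≠ c' i) with hDd
    have hsub : Dd \ T ⊆ S := by
      intro i hi
      simp only [hDd, hT, hS, Finset.mem_sdiff, Finset.mem_filter, Finset.mem_univ,
        true_and, not_or, not_not] at hi ⊢
      obtain ⟨h1, h2, h3⟩ := hi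
      rw [h2, h3]; exact h1
    have h1 : Dd.card ≤ (Dd \ T).card + T.card := Finset.card_le_card_sdiff_add_card
    have h2 : (Dd \ T).card ≤ S.card := Finset.card_le_card hsub
    have h3 : d ≤ Dd.card := hdist
    omega
  calc ∏ i ∈ S, ‖star (e (ct i)) ⬝ᵥ e (ct' i)‖
      ≤ ∏ _i ∈ S, β := by
        apply Finset.prod_le_prod
        · intro i _; exact norm_nonneg _
        · intro i hi
          simp only [hS, Finset.mem_filter] at hi
          exact hover _ _ hi.2
    _ = β ^ S.card := Finset.prod_const β
    _ ≤ β ^ (d - α) := pow_le_pow_of_le_one hβ0 hβ1 hcard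
end
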